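/- For every positive integer a, the graph induced by the internal vertices {v_1, …, v_14} of the Doubling a-Switch gadget (with all arcs among these vertices) admits a path decomposition of width at most 5 whose first bag contains {v_4, v_9} and whose last bag contains {v_13, v_14}. -/
import Mathlib


/-- Vertices of the Doubling `a`-Switch gadget: `0,…,13 = v₁,…,v₁₄`,
`14 = s₂`, `15 = t₁`, `16 = e_L`, `17 = e_R`, `18 = o_B`, `19 = o_T`. -/
abbrev DSwitchV := Fin 20

/-- Arc capacities of the Doubling `a`-Switch gadget (capacity `0` = no arc). -/
def dswitchCap (a : ℕ) (u v : DSwitchV) : ℕ :=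
  if (u, v) ∈ ([(3, 4), (4, 5), (5, 6), (6, 7), (7, 15),
      (8, 9), (9, 10), (10, 11), (11, 7),
      (1, 3), (1, 5), (2, 8), (2, 10),
      (4, 12), (6, 12), (9, 13), (11, 13),
      (16, 3), (17, 8)] : List (DSwitchV × DSwitchV)) then a
  else if (u, v) ∈ ([(14, 0), (0, 1), (0, 2), (12, 18), (13, 19)] :
      List (DSwitchV × DSwitchV)) then 2 * a
  else 0

/-- A path decomposition of the directed graph on `V` with arc relation `Adj`,
with bags `X 0, …, X r`. -/
def IsPathDecomp {V : Type*} (Adj : V → V → Prop) {r : ℕ}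
    (X : Fin (r + 1) → Finset V) : Prop :=
  (∀ v, ∃ i, v ∈ X i) ∧
  (∀ u v, Adj u v → ∃ i, u ∈ X i ∧ v ∈ X i) ∧
  (∀ v (i j k : Fin (r + 1)), i ≤ j → j ≤ k → v ∈ X i → v ∈ X k → v ∈ X j)

def dBags : Fin 8 → Finset (Fin 14) :=
  ![{0,1,2,3,8}, {1,2,3,4,8,12}, {1,2,4,5,8,12}, {2,5,6,8,12},
    {2,6,7,8,12}, {2,7,8,9,12,13}, {2,7,9,10,12,13}, {7,10,11,12,13}]

lemma dBags_cover : ∀ u v : Fin 14,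
    0 < dswitchCap 1 (Fin.castLE (by omega) u) (Fin.castLE (by omega) v) →
    ∃ i, u ∈ dBags i ∧ v ∈ dBags i := by decide

/-- Lemma 3.15: the internal part of the Doubling `a`-Switch gadget (on
`v₁,…,v₁₄`) has a path decomposition of width 5 with `v₄, v₉` in the first bag
and `v₁₃, v₁₄` in the last bag. -/
theorem doubling_switch_gadget_pathwidth (a : ℕ) (ha : 0 < a) :
    ∃ (r : ℕ) (X : Fin (r + 1) → Finset (Fin 14)),
      IsPathDecomp
        (fun u v => 0 < dswitchCap a (Fin.castLE (by omega) u) (Fin.castLE (by omega) v)) X ∧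
      (∀ i, (X i).card ≤ 5 + 1) ∧
      (3 : Fin 14) ∈ X 0 ∧ (8 : Fin 14) ∈ X 0 ∧
      (12 : Fin 14) ∈ X (Fin.last r) ∧ (13 : Fin 14) ∈ X (Fin.last r) := by
  have key : ∀ u v : DSwitchV, dswitchCap a u v = a * dswitchCap 1 u v := by
    intro u v
    unfold dswitchCap
    split_ifs <;> ring
  refine ⟨7, dBags, ⟨?_, ?_, ?_⟩, ?_, ?_, ?_, ?_, ?_⟩
  · decide
  · intro u v h
    rw [key] at h
    refine dBags_cover u v ?_
    rcases Nat.eq_zero_or_pos (dswitchCap 1 (Fin.castLE (by omega) u)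
      (Fin.castLE (by omega) v)) with h0 | h0
    · rw [h0, mul_zero] at h; exact absurd h (lt_irrefl 0)
    · exact h0
  · decide
  · decide
  all_goals decide
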